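/- Let κ > 0 and k ∈ ℕ, and let j_{k,ℓ} denote the ℓ-th positive zero of J_k. For each ℓ ≥ 1, the function F̃_k(α) = (κ/α)·I_{k+1}(κ/α)/I_k(κ/α) + α·J_{k+1}(α)/J_k(α) satisfies lim_{α → j_{k,ℓ}⁺} F̃_k(α) = −∞ and F̃_k(j_{k+1,ℓ}) > 0. Consequently F̃_k possesses at least one root in the interval (j_{k,ℓ}, j_{k+1,ℓ}). -/

import Mathlib

/-!
The identities `(z⁻ᵏ J_k)' = -z⁻ᵏ J_{k+1}` and `(z^{k+1} J_{k+1})' = z^{k+1} J_k`, read off the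
power series, give by Rolle's theorem that the positive zeros of `J_k` and `J_{k+1}` interlace.
So on `(j_{k,ℓ}, j_{k+1,ℓ}]` the function `J_k` does not vanish, while `J_{k+1}` keeps the sign of
`J_{k+1}(j_{k,ℓ}) ≠ 0`; the mean value theorem for `z⁻ᵏ J_k` then shows that `J_k` has the opposite
sign just right of `j_{k,ℓ}`, so `α J_{k+1}(α) / J_k(α) → -∞` there while the `I`-term stays
bounded. At `j_{k+1,ℓ}` only the positive `I`-term survives, and the intermediate value theorem
gives the root.
-/

open Real Filter Set

/-- Modified Bessel function of the first kind of order `ν`, defined by its power series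
(valid for `z > 0`). -/
noncomputable def besselI (ν : ℝ) (z : ℝ) : ℝ :=
  ∑' m : ℕ, (z / 2) ^ (2 * (m : ℝ) + ν) / ((m.factorial : ℝ) * Real.Gamma ((m : ℝ) + ν + 1))

/-- Bessel function of the first kind of order `ν`, defined by its power series
(valid for `z > 0`). -/
noncomputable def besselJ (ν : ℝ) (z : ℝ) : ℝ :=
  ∑' m : ℕ, (-1 : ℝ) ^ m * (z / 2) ^ (2 * (m : ℝ) + ν) /
    ((m.factorial : ℝ) * Real.Gamma ((m : ℝ) + ν + 1))

/-- The function `F̃_k` from the paper (here `κ > 0`, `k ∈ ℕ`). -/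
noncomputable def Ftilde (κ : ℝ) (k : ℕ) (α : ℝ) : ℝ :=
  (κ / α) * besselI (k + 1) (κ / α) / besselI k (κ / α)
    + α * besselJ (k + 1) α / besselJ k α

open scoped Nat Topology

section FactorialSeries

variable {a : ℕ → ℝ}

lemma summable_mul_pow_of_abs_le_inv_factorial (ha : ∀ m, |a m| ≤ (m ! : ℝ)⁻¹) (y : ℝ) :
    Summable fun m => a m * y ^ m := by
  refine .of_norm_bounded (Real.summable_pow_div_factorial |y|) fun m => ?_
  rw [Real.norm_eq_abs, abs_mul, abs_pow, div_eq_inv_mul]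
  exact mul_le_mul_of_nonneg_right (ha m) (by positivity)

lemma summable_mul_pow_sub_one_div_factorial (R : ℝ) :
    Summable fun m : ℕ => (m : ℝ) * R ^ (m - 1) / m ! := by
  rw [← summable_nat_add_iff 1]
  refine (Real.summable_pow_div_factorial R).congr fun m => ?_
  rw [Nat.add_sub_cancel, Nat.factorial_succ]
  push_cast
  field_simp

lemma hasDerivAt_tsum_mul_pow_of_abs_le_inv_factorial (ha : ∀ m, |a m| ≤ (m ! : ℝ)⁻¹)
    (y : ℝ) :
    HasDerivAt (fun y => ∑' m, a m * y ^ m) (∑' m, a (m + 1) * (m + 1) * y ^ m) y := by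
  set R := |y| + 1
  have hy : y ∈ Ioo (-R) R := abs_lt.mp (lt_add_one _)
  have hbound : ∀ m, ∀ z ∈ Ioo (-R) R, ‖a m * (m * z ^ (m - 1))‖ ≤ m * R ^ (m - 1) / m ! := by
    intro m z hz
    rw [Real.norm_eq_abs, abs_mul, abs_mul, abs_pow, Nat.abs_cast, div_eq_inv_mul]
    gcongr
    · exact ha m
    · exact (abs_lt.mpr hz).le
  have hderiv := hasDerivAt_tsum_of_isPreconnected (summable_mul_pow_sub_one_div_factorial R)
    isOpen_Ioo isPreconnected_Ioo (fun m z _ => (hasDerivAt_pow m z).const_mul (a m)) hbound hy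
    (summable_mul_pow_of_abs_le_inv_factorial ha y) hy
  rw [(Summable.of_norm_bounded (summable_mul_pow_sub_one_div_factorial R)
    fun m => hbound m y hy).tsum_eq_zero_add] at hderiv
  refine hderiv.congr_deriv ?_
  simp only [Nat.cast_zero, zero_mul, mul_zero, zero_add, Nat.add_sub_cancel, Nat.cast_succ,
    mul_assoc]

lemma continuous_tsum_mul_pow_of_abs_le_inv_factorial (ha : ∀ m, |a m| ≤ (m ! : ℝ)⁻¹) :
    Continuous fun y => ∑' m, a m * y ^ m :=
  continuous_iff_continuousAt.mpr fun y =>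
    (hasDerivAt_tsum_mul_pow_of_abs_le_inv_factorial ha y).continuousAt

end FactorialSeries

noncomputable def besselCoeff (k m : ℕ) : ℝ := ((4 : ℝ) ^ m * m ! * (m + k)!)⁻¹

/-- `J_k(z) = (z / 2) ^ k * besselJSeries k (z ^ 2)`, see `besselJ_natCast_eq`. -/
noncomputable def besselJSeries (k : ℕ) (y : ℝ) : ℝ := ∑' m, (-1) ^ m * besselCoeff k m * y ^ m

noncomputable def besselISeries (k : ℕ) (y : ℝ) : ℝ := ∑' m, besselCoeff k m * y ^ m

lemma besselCoeff_pos (k m : ℕ) : 0 < besselCoeff k m := by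
  unfold besselCoeff; positivity

lemma abs_besselCoeff_le (k m : ℕ) : |besselCoeff k m| ≤ (m ! : ℝ)⁻¹ := by
  rw [abs_of_pos (besselCoeff_pos k m), besselCoeff]
  gcongr
  calc (m ! : ℝ) = 1 * m ! * 1 := by ring
    _ ≤ 4 ^ m * m ! * (m + k)! := by
      gcongr
      · exact one_le_pow₀ (by norm_num)
      · exact_mod_cast (m + k).factorial_pos

lemma abs_neg_one_pow_mul_besselCoeff_le (k m : ℕ) :
    |(-1) ^ m * besselCoeff k m| ≤ (m ! : ℝ)⁻¹ := by
  simpa using abs_besselCoeff_le k m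

lemma besselCoeff_succ_mul (k m : ℕ) :
    besselCoeff k (m + 1) * (m + 1) = besselCoeff (k + 1) m / 4 := by
  simp only [besselCoeff, Nat.factorial_succ, show m + 1 + k = m + (k + 1) by ring, pow_succ]
  push_cast
  field_simp

lemma besselCoeff_sub_mul_besselCoeff_succ (k m : ℕ) :
    besselCoeff k (m + 1) - (k + 1) * besselCoeff (k + 1) (m + 1) = besselCoeff (k + 2) m / 4 := by
  simp only [besselCoeff, Nat.factorial_succ, show m + 1 + k = m + k + 1 by ring,
    show m + 1 + (k + 1) = m + k + 1 + 1 by ring, show m + (k + 2) = m + k + 1 + 1 by ring,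
    pow_succ]
  push_cast
  field_simp
  ring

lemma besselCoeff_zero_sub_mul_besselCoeff_succ (k : ℕ) :
    besselCoeff k 0 - (k + 1) * besselCoeff (k + 1) 0 = 0 := by
  simp only [besselCoeff, Nat.factorial_succ, zero_add]
  push_cast
  field_simp
  ring

lemma hasDerivAt_besselJSeries (k : ℕ) (y : ℝ) :
    HasDerivAt (besselJSeries k) (-besselJSeries (k + 1) y / 4) y := by
  refine (hasDerivAt_tsum_mul_pow_of_abs_le_inv_factorial
    (abs_neg_one_pow_mul_besselCoeff_le k) y).congr_deriv ?_
  rw [besselJSeries, ← tsum_neg, ← tsum_div_const]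
  congr 1 with m
  rw [mul_assoc _ (besselCoeff k (m + 1)), besselCoeff_succ_mul]
  ring

lemma continuous_besselJSeries (k : ℕ) : Continuous (besselJSeries k) :=
  continuous_tsum_mul_pow_of_abs_le_inv_factorial (abs_neg_one_pow_mul_besselCoeff_le k)

lemma continuous_besselISeries (k : ℕ) : Continuous (besselISeries k) :=
  continuous_tsum_mul_pow_of_abs_le_inv_factorial (abs_besselCoeff_le k)

lemma besselISeries_pos (k : ℕ) {y : ℝ} (hy : 0 ≤ y) : 0 < besselISeries k y :=
  (summable_mul_pow_of_abs_le_inv_factorial (abs_besselCoeff_le k) y).tsum_pos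
    (fun m => mul_nonneg (besselCoeff_pos k m).le (pow_nonneg hy m)) 0
    (by simpa using besselCoeff_pos k 0)

/-- The three-term recurrence `J_k(z) + J_{k+2}(z) = 2 (k + 1) / z * J_{k+1}(z)` in `y = z ^ 2`. -/
lemma besselJSeries_eq_sub (k : ℕ) (y : ℝ) :
    besselJSeries k y = (k + 1) * besselJSeries (k + 1) y - y / 4 * besselJSeries (k + 2) y := by
  have hsum (n : ℕ) := summable_mul_pow_of_abs_le_inv_factorial
    (abs_neg_one_pow_mul_besselCoeff_le n) y
  set d : ℕ → ℝ := fun m => besselCoeff k m - (k + 1) * besselCoeff (k + 1) m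
  have hd : Summable fun m => (-1) ^ m * d m * y ^ m :=
    ((hsum k).sub ((hsum (k + 1)).mul_left ((k : ℝ) + 1))).congr fun m => by
      simp only [d]; ring
  have hdiff : besselJSeries k y - (k + 1) * besselJSeries (k + 1) y
      = ∑' m, (-1) ^ m * d m * y ^ m := by
    rw [besselJSeries, besselJSeries, ← tsum_mul_left, ← (hsum k).tsum_sub ((hsum _).mul_left _)]
    congr 1 with m
    ring
  have hshift : ∑' m, (-1) ^ m * d m * y ^ m = -(y / 4) * besselJSeries (k + 2) y := by
    rw [hd.tsum_eq_zero_add, besselJSeries, ← tsum_mul_left]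
    simp only [d, besselCoeff_zero_sub_mul_besselCoeff_succ, besselCoeff_sub_mul_besselCoeff_succ,
      mul_zero, zero_mul, zero_add]
    congr 1 with m
    ring
  linarith

lemma rpow_div_factorial_mul_Gamma (k m : ℕ) (z : ℝ) :
    (z / 2) ^ (2 * (m : ℝ) + k) / ((m ! : ℝ) * Gamma (m + k + 1))
      = (z / 2) ^ k * (besselCoeff k m * (z ^ 2) ^ m) := by
  rw [show (m : ℝ) + k + 1 = ((m + k : ℕ) : ℝ) + 1 by push_cast; ring, Gamma_nat_eq_factorial,
    show 2 * (m : ℝ) + k = ((2 * m + k : ℕ) : ℝ) by push_cast; ring, rpow_natCast, besselCoeff,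
    pow_add, pow_mul, div_pow, div_pow]
  field_simp
  ring

lemma besselJ_natCast_eq (k : ℕ) (z : ℝ) : besselJ k z = (z / 2) ^ k * besselJSeries k (z ^ 2) := by
  rw [besselJ, besselJSeries, ← tsum_mul_left]
  congr 1 with m
  rw [mul_div_assoc, rpow_div_factorial_mul_Gamma]
  ring

lemma besselI_natCast_eq (k : ℕ) (z : ℝ) : besselI k z = (z / 2) ^ k * besselISeries k (z ^ 2) := by
  rw [besselI, besselISeries, ← tsum_mul_left]
  exact tsum_congr fun m => rpow_div_factorial_mul_Gamma k m z

lemma continuous_besselJ (k : ℕ) : Continuous (besselJ k) := by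
  simp only [funext (besselJ_natCast_eq k)]
  exact (by fun_prop : Continuous fun z : ℝ => (z / 2) ^ k).mul
    ((continuous_besselJSeries k).comp (continuous_pow 2))

lemma continuous_besselI (k : ℕ) : Continuous (besselI k) := by
  simp only [funext (besselI_natCast_eq k)]
  exact (by fun_prop : Continuous fun z : ℝ => (z / 2) ^ k).mul
    ((continuous_besselISeries k).comp (continuous_pow 2))

lemma besselI_pos (k : ℕ) {z : ℝ} (hz : 0 < z) : 0 < besselI k z := by
  rw [besselI_natCast_eq]
  have := besselISeries_pos k (sq_nonneg z)
  positivity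

lemma besselJ_add_one_eq (k : ℕ) (z : ℝ) :
    besselJ (k + 1) z = (z / 2) ^ (k + 1) * besselJSeries (k + 1) (z ^ 2) := by
  exact_mod_cast besselJ_natCast_eq (k + 1) z

lemma besselJ_add_one_apply_zero (k : ℕ) : besselJ (k + 1) 0 = 0 := by
  simp [besselJ_add_one_eq]

lemma hasDerivAt_besselJ_div_pow (k : ℕ) {z : ℝ} (hz : z ≠ 0) :
    HasDerivAt (fun w => besselJ k w / w ^ k) (-besselJ (k + 1) z / z ^ k) z := by
  have hS : HasDerivAt (fun w => besselJSeries k (w ^ 2) / 2 ^ k)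
      (-besselJSeries (k + 1) (z ^ 2) / 4 * (2 * z) / 2 ^ k) z := by
    simpa using ((hasDerivAt_besselJSeries k (z ^ 2)).comp z (hasDerivAt_pow 2 z)).div_const _
  have heq : (fun w => besselJ k w / w ^ k) =ᶠ[𝓝 z]
      fun w => besselJSeries k (w ^ 2) / 2 ^ k := by
    filter_upwards [isOpen_ne.mem_nhds hz] with w hw
    rw [besselJ_natCast_eq, div_pow]
    field_simp
  refine (hS.congr_of_eventuallyEq heq).congr_deriv ?_
  rw [besselJ_add_one_eq, div_pow]
  field_simp
  ring

lemma hasDerivAt_pow_mul_besselJ (k : ℕ) (z : ℝ) :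
    HasDerivAt (fun w => w ^ (k + 1) * besselJ (k + 1) w) (z ^ (k + 1) * besselJ k z) z := by
  have hseries (y : ℝ) : HasDerivAt (fun y => y ^ (k + 1) * besselJSeries (k + 1) y)
      (y ^ k * besselJSeries k y) y := by
    refine ((hasDerivAt_pow (k + 1) y).mul (hasDerivAt_besselJSeries (k + 1) y)).congr_deriv ?_
    rw [besselJSeries_eq_sub k y]
    push_cast
    ring
  have hG : HasDerivAt (fun w => (w ^ 2) ^ (k + 1) * besselJSeries (k + 1) (w ^ 2) / 2 ^ (k + 1))
      ((z ^ 2) ^ k * besselJSeries k (z ^ 2) * (2 * z) / 2 ^ (k + 1)) z := by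
    simpa using ((hseries (z ^ 2)).comp z (hasDerivAt_pow 2 z)).div_const _
  convert hG using 1
  · ext w
    rw [besselJ_add_one_eq, div_pow]
    field_simp
    ring
  · rw [besselJ_natCast_eq, div_pow]
    field_simp
    ring

lemma exists_besselJ_add_one_eq_zero_mem_Ioo (k : ℕ) {p q : ℝ} (hp : 0 < p) (hpq : p < q)
    (hJp : besselJ k p = 0) (hJq : besselJ k q = 0) :
    ∃ c ∈ Ioo p q, besselJ (k + 1) c = 0 := by
  have hderiv : ∀ x ∈ Icc p q, HasDerivAt (fun w => besselJ k w / w ^ k)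
      (-besselJ (k + 1) x / x ^ k) x := fun x hx =>
    hasDerivAt_besselJ_div_pow k (hp.trans_le hx.1).ne'
  obtain ⟨c, hc, hc0⟩ := exists_hasDerivAt_eq_zero hpq
    (fun x hx => (hderiv x hx).continuousAt.continuousWithinAt) (by simp [hJp, hJq])
    fun x hx => hderiv x (Ioo_subset_Icc_self hx)
  refine ⟨c, hc, ?_⟩
  simpa [(hp.trans hc.1).ne'] using hc0

lemma exists_besselJ_eq_zero_mem_Ioo (k : ℕ) {p q : ℝ} (hp : 0 ≤ p) (hpq : p < q)
    (hJp : besselJ (k + 1) p = 0) (hJq : besselJ (k + 1) q = 0) :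
    ∃ c ∈ Ioo p q, besselJ k c = 0 := by
  obtain ⟨c, hc, hc0⟩ := exists_hasDerivAt_eq_zero hpq
    (fun x _ => (hasDerivAt_pow_mul_besselJ k x).continuousAt.continuousWithinAt)
    (by simp [hJp, hJq]) fun x _ => hasDerivAt_pow_mul_besselJ k x
  refine ⟨c, hc, ?_⟩
  simpa [(hp.trans_lt hc.1).ne'] using hc0

lemma mul_pos_of_forall_mem_Icc_ne_zero {f : ℝ → ℝ} {a b : ℝ} (hab : a ≤ b)
    (hf : ContinuousOn f (Icc a b)) (hf0 : ∀ x ∈ Icc a b, f x ≠ 0) : 0 < f a * f b := by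
  by_contra! h
  have h0 : (0 : ℝ) ∈ uIcc (f a) (f b) := by
    rcases mul_nonpos_iff.mp h with h | h
    · exact mem_uIcc.mpr (Or.inr ⟨h.2, h.1⟩)
    · exact mem_uIcc.mpr (Or.inl ⟨h.1, h.2⟩)
  obtain ⟨c, hc, hfc⟩ := intermediate_value_uIcc (uIcc_of_le hab ▸ hf) h0
  exact hf0 c (uIcc_of_le hab ▸ hc) hfc

lemma besselJ_mul_besselJ_add_one_neg (k : ℕ) {a x : ℝ} (ha : 0 < a) (hax : a < x)
    (hJa : besselJ k a = 0) (hne : ∀ t ∈ Icc a x, besselJ (k + 1) t ≠ 0) :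
    besselJ k x * besselJ (k + 1) a < 0 := by
  obtain ⟨c, hc, hslope⟩ := exists_hasDerivAt_eq_slope (fun w => besselJ k w / w ^ k)
    (fun w => -besselJ (k + 1) w / w ^ k) hax
    (fun t ht =>
      (hasDerivAt_besselJ_div_pow k (ha.trans_le ht.1).ne').continuousAt.continuousWithinAt)
    fun t ht => hasDerivAt_besselJ_div_pow k (ha.trans ht.1).ne'
  have hsign : 0 < besselJ (k + 1) a * besselJ (k + 1) c :=
    mul_pos_of_forall_mem_Icc_ne_zero hc.1.le
      (by exact_mod_cast (continuous_besselJ (k + 1)).continuousOn)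
      fun t ht => hne t ⟨ht.1, ht.2.trans hc.2.le⟩
  have hc0 : 0 < c := ha.trans hc.1
  have hx0 : 0 < x := ha.trans hax
  rw [hJa, zero_div, sub_zero, eq_div_iff (sub_pos.mpr hax).ne', div_mul_eq_mul_div,
    div_eq_div_iff (pow_pos hc0 k).ne' (pow_pos hx0 k).ne'] at hslope
  have hprod : besselJ k x * besselJ (k + 1) a * c ^ k
      = -((x - a) * x ^ k * (besselJ (k + 1) a * besselJ (k + 1) c)) := by
    linear_combination -besselJ (k + 1) a * hslope
  have hneg : besselJ k x * besselJ (k + 1) a * c ^ k < 0 := by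
    rw [hprod]
    have := sub_pos.mpr hax
    have := pow_pos hx0 k
    exact neg_neg_of_pos (by positivity)
  exact neg_of_mul_neg_left hneg (pow_pos hc0 k).le

structure EnumeratesPosZeros (f : ℝ → ℝ) (e : ℕ → ℝ) : Prop where
  strictMono : StrictMono e
  pos : ∀ n, 0 < e n
  apply_eq_zero : ∀ n, f (e n) = 0
  exists_eq : ∀ x, 0 < x → f x = 0 → ∃ n, e n = x

namespace EnumeratesPosZeros

variable {f : ℝ → ℝ} {e : ℕ → ℝ} {x : ℝ}

lemma zero_le (he : EnumeratesPosZeros f e) (hx : 0 < x) (hfx : f x = 0) : e 0 ≤ x := by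
  obtain ⟨n, rfl⟩ := he.exists_eq x hx hfx
  exact he.strictMono.monotone n.zero_le

lemma succ_le (he : EnumeratesPosZeros f e) {n : ℕ} (hnx : e n < x) (hfx : f x = 0) :
    e (n + 1) ≤ x := by
  obtain ⟨i, rfl⟩ := he.exists_eq x ((he.pos n).trans hnx) hfx
  exact he.strictMono.monotone (he.strictMono.lt_iff_lt.mp hnx)

lemma apply_ne_zero (he : EnumeratesPosZeros f e) {n : ℕ} (hnx : e n < x) (hxn : x < e (n + 1)) :
    f x ≠ 0 :=
  fun hfx => (he.succ_le hnx hfx).not_gt hxn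

lemma lt_of_exists_zero_mem_Ioo (he : EnumeratesPosZeros f e) {s : ℕ → ℝ}
    (h0 : ∃ c ∈ Ioo 0 (s 0), f c = 0) (hs : ∀ i, ∃ c ∈ Ioo (s i) (s (i + 1)), f c = 0) :
    ∀ i, e i < s i
  | 0 => by
    obtain ⟨c, hc, hfc⟩ := h0
    exact (he.zero_le hc.1 hfc).trans_lt hc.2
  | i + 1 => by
    obtain ⟨c, hc, hfc⟩ := hs i
    exact (he.succ_le ((he.lt_of_exists_zero_mem_Ioo h0 hs i).trans hc.1) hfc).trans_lt hc.2

end EnumeratesPosZeros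

section Interlacing

variable {j : ℕ → ℕ → ℝ}

lemma EnumeratesPosZeros.besselJ_add_one (hj : ∀ m : ℕ, EnumeratesPosZeros (besselJ m) (j m))
    (m : ℕ) : EnumeratesPosZeros (besselJ (m + 1)) (j (m + 1)) := by
  exact_mod_cast hj (m + 1)

lemma besselJZero_lt_succ (hj : ∀ m : ℕ, EnumeratesPosZeros (besselJ m) (j m)) (m i : ℕ) :
    j m i < j (m + 1) i := by
  have hj' := EnumeratesPosZeros.besselJ_add_one hj m
  refine (hj m).lt_of_exists_zero_mem_Ioo ?_ (fun i => ?_) i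
  · exact exists_besselJ_eq_zero_mem_Ioo m le_rfl (hj'.pos 0) (besselJ_add_one_apply_zero m)
      (hj'.apply_eq_zero 0)
  · exact exists_besselJ_eq_zero_mem_Ioo m (hj'.pos i).le (hj'.strictMono i.lt_succ_self)
      (hj'.apply_eq_zero i) (hj'.apply_eq_zero (i + 1))

lemma besselJZero_succ_lt (hj : ∀ m : ℕ, EnumeratesPosZeros (besselJ m) (j m)) (m i : ℕ) :
    j (m + 1) i < j m (i + 1) := by
  have hRolle (i : ℕ) := exists_besselJ_add_one_eq_zero_mem_Ioo m ((hj m).pos i)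
    ((hj m).strictMono i.lt_succ_self) ((hj m).apply_eq_zero i) ((hj m).apply_eq_zero (i + 1))
  refine (EnumeratesPosZeros.besselJ_add_one hj m).lt_of_exists_zero_mem_Ioo
    (s := fun i => j m (i + 1)) ?_ (fun i => hRolle (i + 1)) i
  obtain ⟨c, hc, hJc⟩ := hRolle 0
  exact ⟨c, ⟨((hj m).pos 0).trans hc.1, hc.2⟩, hJc⟩

lemma besselJ_ne_zero_of_mem_Ioc (hj : ∀ m : ℕ, EnumeratesPosZeros (besselJ m) (j m))
    {k l : ℕ} {x : ℝ} (hx : x ∈ Ioc (j k l) (j (k + 1) l)) : besselJ k x ≠ 0 :=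
  (hj k).apply_ne_zero hx.1 (hx.2.trans_lt (besselJZero_succ_lt hj k l))

lemma besselJ_add_one_ne_zero_of_mem_Ico (hj : ∀ m : ℕ, EnumeratesPosZeros (besselJ m) (j m))
    {k l : ℕ} {x : ℝ} (hx : x ∈ Ico (j k l) (j (k + 1) l)) : besselJ (k + 1) x ≠ 0 := by
  have hj' := EnumeratesPosZeros.besselJ_add_one hj k
  intro hJx
  obtain ⟨i, rfl⟩ := hj'.exists_eq x (((hj k).pos l).trans_le hx.1) hJx
  have hil : i + 1 ≤ l := hj'.strictMono.lt_iff_lt.mp hx.2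
  exact (hx.1.trans_lt (besselJZero_succ_lt hj k i)).not_ge ((hj k).strictMono.monotone hil)

end Interlacing

lemma exists_eq_zero_of_tendsto_atBot {f : ℝ → ℝ} {a b : ℝ} (hab : a < b)
    (hf : Tendsto f (𝓝[>] a) atBot) (hfb : 0 < f b) (hcont : ContinuousOn f (Ioc a b)) :
    ∃ x ∈ Ioo a b, f x = 0 := by
  obtain ⟨p, hfp, hp⟩ :=
    ((hf.eventually (eventually_lt_atBot 0)).and (Ioo_mem_nhdsGT hab)).exists
  obtain ⟨x, hx, hfx⟩ := intermediate_value_Ioo hp.2.le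
    (hcont.mono (Icc_subset_Ioc_iff hp.2.le |>.mpr ⟨hp.1, le_rfl⟩)) ⟨hfp, hfb⟩
  exact ⟨x, ⟨hp.1.trans hx.1, hx.2⟩, hfx⟩

section Ftilde

variable {κ : ℝ} (k : ℕ)

lemma continuousAt_besselI_ratio (hκ : 0 < κ) {x : ℝ} (hx : 0 < x) :
    ContinuousAt (fun α => κ / α * besselI (k + 1) (κ / α) / besselI k (κ / α)) x := by
  have hquot : ContinuousAt (fun α => κ / α) x := continuousAt_const.div continuousAt_id hx.ne'
  have hI : Continuous (besselI (k + 1)) := by exact_mod_cast continuous_besselI (k + 1)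
  exact (hquot.mul (hI.continuousAt.comp hquot)).div
    ((continuous_besselI k).continuousAt.comp hquot) (besselI_pos k (div_pos hκ hx)).ne'

lemma tendsto_besselJ_ratio_atBot {a b : ℝ} (ha : 0 < a) (hab : a < b)
    (hJa : besselJ k a = 0) (hne : ∀ t ∈ Ico a b, besselJ (k + 1) t ≠ 0) :
    Tendsto (fun α => α * besselJ (k + 1) α / besselJ k α) (𝓝[>] a) atBot := by
  set C := besselJ (k + 1) a
  have hC : C ≠ 0 := hne a ⟨le_rfl, hab⟩
  have hJ1 : Continuous (besselJ (k + 1)) := by exact_mod_cast continuous_besselJ (k + 1)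
  have hnum : Tendsto (fun α => α * besselJ (k + 1) α * C) (𝓝[>] a) (𝓝 (a * C * C)) :=
    ((continuous_id.mul hJ1).mul continuous_const).continuousAt.tendsto.mono_left
      nhdsWithin_le_nhds
  have hden : Tendsto (fun α => besselJ k α * C) (𝓝[>] a) (𝓝[<] 0) := by
    refine tendsto_nhdsWithin_iff.mpr ⟨?_, ?_⟩
    · have : Tendsto (fun α => besselJ k α * C) (𝓝 a) (𝓝 (besselJ k a * C)) :=
        ((continuous_besselJ k).mul continuous_const).continuousAt.tendsto
      simpa [hJa] using this.mono_left nhdsWithin_le_nhds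
    · filter_upwards [Ioo_mem_nhdsGT hab] with x hx
      exact besselJ_mul_besselJ_add_one_neg k ha hx.1 hJa
        fun t ht => hne t ⟨ht.1, ht.2.trans_lt hx.2⟩
  have hpos : 0 < a * C * C := by rw [mul_assoc]; exact mul_pos ha (mul_self_pos.mpr hC)
  refine (hnum.pos_mul_atBot hpos hden.inv_tendsto_nhdsLT_zero).congr fun α => ?_
  rw [Pi.inv_apply, ← div_eq_mul_inv, mul_div_mul_right _ _ hC]

lemma continuousAt_Ftilde (hκ : 0 < κ) {x : ℝ} (hx : 0 < x) (hJx : besselJ k x ≠ 0) :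
    ContinuousAt (Ftilde κ k) x := by
  have hJ1 : Continuous (besselJ (k + 1)) := by exact_mod_cast continuous_besselJ (k + 1)
  exact (continuousAt_besselI_ratio k hκ hx).add
    ((continuousAt_id.mul hJ1.continuousAt).div (continuous_besselJ k).continuousAt hJx)

lemma tendsto_Ftilde_atBot (hκ : 0 < κ) {a b : ℝ} (ha : 0 < a) (hab : a < b)
    (hJa : besselJ k a = 0) (hne : ∀ t ∈ Ico a b, besselJ (k + 1) t ≠ 0) :
    Tendsto (Ftilde κ k) (𝓝[>] a) atBot :=
  ((continuousAt_besselI_ratio k hκ ha).tendsto.mono_left nhdsWithin_le_nhds).add_atBot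
    (tendsto_besselJ_ratio_atBot k ha hab hJa hne)

lemma Ftilde_pos (hκ : 0 < κ) {b : ℝ} (hb : 0 < b) (hJb : besselJ (k + 1) b = 0) :
    0 < Ftilde κ k b := by
  have hI : 0 < besselI (k + 1) (κ / b) := by exact_mod_cast besselI_pos (k + 1) (div_pos hκ hb)
  have := besselI_pos k (div_pos hκ hb)
  rw [Ftilde, hJb, mul_zero, zero_div, add_zero]
  positivity

end Ftilde

/-- `j m ℓ` is the `(ℓ + 1)`-st positive zero of `J_m`, the paper's `j_{m,ℓ+1}`. -/
theorem stmt9 (κ : ℝ) (hκ : 0 < κ) (k : ℕ) (j : ℕ → ℕ → ℝ)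
    (hmono : ∀ m, StrictMono (j m)) (hpos : ∀ m l, 0 < j m l)
    (hzero : ∀ (m l : ℕ), besselJ m (j m l) = 0)
    (hall : ∀ (m : ℕ) (x : ℝ), 0 < x → besselJ m x = 0 → ∃ l, j m l = x) :
    ∀ l : ℕ,
      Filter.Tendsto (Ftilde κ k) (nhdsWithin (j k l) (Set.Ioi (j k l))) Filter.atBot ∧
      0 < Ftilde κ k (j (k + 1) l) ∧
      ∃ α ∈ Set.Ioo (j k l) (j (k + 1) l), Ftilde κ k α = 0 := by
  intro l
  have hj : ∀ m : ℕ, EnumeratesPosZeros (besselJ m) (j m) :=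
    fun m => ⟨hmono m, hpos m, hzero m, hall m⟩
  have hab := besselJZero_lt_succ hj k l
  have hlim := tendsto_Ftilde_atBot k hκ (hpos k l) hab (hzero k l)
    fun t ht => besselJ_add_one_ne_zero_of_mem_Ico hj ht
  have hFb := Ftilde_pos k hκ (hpos (k + 1) l)
    ((EnumeratesPosZeros.besselJ_add_one hj k).apply_eq_zero l)
  refine ⟨hlim, hFb, exists_eq_zero_of_tendsto_atBot hab hlim hFb fun x hx => ?_⟩
  exact (continuousAt_Ftilde k hκ ((hpos k l).trans hx.1)
    (besselJ_ne_zero_of_mem_Ioc hj hx)).continuousWithinAt
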